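/- arXiv:1107.1074 — 3 statements merged into one kernel-verified Lean document; each statement's English description precedes it below -/
import Mathlib

section
/- For every fixed x, y ∈ ℤ^d, the transition probability satisfies p(t; x, y) ~ γ_d · t^{-d/2} as t → ∞; that is, lim_{t→∞} t^{d/2} p(t; x, y) = γ_d. -/
open MeasureTheory Real Filter Topology Asymptotics

/-- Fourier symbol `φ(θ) = ∑_z a(z) cos⟨z,θ⟩` of the random walk on `ℤ^d`. -/
noncomputable def phiSymb (d : ℕ) (a : (Fin d → ℤ) → ℝ) (θ : Fin d → ℝ) : ℝ :=
  ∑' z : Fin d → ℤ, a z * Real.cos (∑ i, (z i : ℝ) * θ i)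

/-- Transition probability `p(t;x,y) = (2π)^{-d} ∫_{[-π,π]^d} e^{φ(θ)t} cos⟨θ,y-x⟩ dθ`. -/
noncomputable def ptrans (d : ℕ) (a : (Fin d → ℤ) → ℝ) (t : ℝ) (x y : Fin d → ℤ) : ℝ :=
  ((2 * π) ^ d)⁻¹ *
    ∫ θ in Set.Icc (fun _ : Fin d => -π) (fun _ : Fin d => π),
      Real.exp (phiSymb d a θ * t) * Real.cos (∑ i, θ i * ((y i : ℝ) - (x i : ℝ)))

/-- Laplace transform `G_λ(x,y) = ∫_0^∞ e^{-λt} p(t;x,y) dt` (Green's function at `λ = 0`). -/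
noncomputable def Glam (d : ℕ) (a : (Fin d → ℤ) → ℝ) (lam : ℝ) (x y : Fin d → ℤ) : ℝ :=
  ∫ t in Set.Ioi (0 : ℝ), Real.exp (-lam * t) * ptrans d a t x y

/-- Hessian matrix `φ''(0)`, with entries `-∑_z a(z) z_i z_j`. -/
noncomputable def hessPhi (d : ℕ) (a : (Fin d → ℤ) → ℝ) : Matrix (Fin d) (Fin d) ℝ :=
  Matrix.of fun i j => -∑' z : Fin d → ℤ, a z * (z i : ℝ) * (z j : ℝ)

/-- `γ_d = (2π)^{-d/2} |det φ''(0)|^{-1/2}`. -/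
noncomputable def gammaConst (d : ℕ) (a : (Fin d → ℤ) → ℝ) : ℝ :=
  ((2 * π) ^ ((d : ℝ) / 2))⁻¹ * (Real.sqrt |(hessPhi d a).det|)⁻¹

/-- `ρ_d(x) = (a/(2π)^d) ∫_{[-π,π]^d} (cos⟨x,θ⟩ - 1)/φ(θ) dθ` for `x ≠ 0`, and `ρ_d(0) = 1`. -/
noncomputable def rhoConst (d : ℕ) (a : (Fin d → ℤ) → ℝ) (x : Fin d → ℤ) : ℝ :=
  if x = 0 then 1 else
    (-(a 0) / (2 * π) ^ d) *
      ∫ θ in Set.Icc (fun _ : Fin d => -π) (fun _ : Fin d => π),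
        (Real.cos (∑ i, (x i : ℝ) * θ i) - 1) / phiSymb d a θ

/-- `γ̃_d(z) = (1/(2(2π)^d)) ∫_{ℝ^d} ⟨v,z⟩² e^{⟨φ''(0)v,v⟩/2} dv`. -/
noncomputable def gammaTilde (d : ℕ) (a : (Fin d → ℤ) → ℝ) (z : Fin d → ℤ) : ℝ :=
  (2 * (2 * π) ^ d)⁻¹ *
    ∫ v : Fin d → ℝ, (∑ i, v i * (z i : ℝ)) ^ 2 *
      Real.exp ((∑ i, (hessPhi d a).mulVec v i * v i) / 2)


/-!
Substituting `θ = u / √t` turns `t ^ (d / 2) * p(t; x, y)` into `(2π)⁻ᵈ` times the integral of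
`exp (t φ(u / √t)) cos ⟨u / √t, y - x⟩` over the dilated box `√t [-π, π]ᵈ`. Writing
`cos s - 1 = -(s² / 2) sinc (s / 2)²` shows `t φ(u / √t) → -⟨Q u, u⟩ / 2`, where `Q = -φ''(0)` is
the second-moment matrix of `a`. Irreducibility makes `Q` positive definite and, through a finite
subset of the support that still generates `ℤᵈ`, gives `φ θ ≤ -c |θ|²` on `[-π, π]ᵈ`: near `0`
use `cos s ≤ 1 - 2 s² / π²`, away from `0` compactness. So `exp (-c |u|²)` dominates, and the limit
is the Gaussian integral `(2π) ^ (d / 2) / √(det Q)` times `(2π)⁻ᵈ`, which is `γ_d`.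
-/

open scoped Matrix

lemma AddSubgroup.exists_finset_subset_of_mem_closure {G : Type*} [AddGroup G] {S : Set G}
    {x : G} (hx : x ∈ closure S) : ∃ t : Finset G, ↑t ⊆ S ∧ x ∈ closure (t : Set G) := by
  classical
  induction hx using closure_induction with
  | mem x hx => exact ⟨{x}, by simpa using hx, subset_closure (by simp)⟩
  | zero => exact ⟨∅, by simp, zero_mem _⟩
  | add x y _ _ hx hy =>
    obtain ⟨t, ht, hxt⟩ := hx
    obtain ⟨u, hu, hyu⟩ := hy
    refine ⟨t ∪ u, by simp [ht, hu], add_mem ?_ ?_⟩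
    · exact closure_mono (by simp) hxt
    · exact closure_mono (by simp) hyu
  | neg x _ hx =>
    obtain ⟨t, ht, hxt⟩ := hx
    exact ⟨t, ht, neg_mem hxt⟩

lemma cos_eq_one_iff_mem_zmultiples (x : ℝ) :
    cos x = 1 ↔ x ∈ AddSubgroup.zmultiples (2 * π) := by
  simp [AddSubgroup.mem_zmultiples_iff, cos_eq_one_iff, zsmul_eq_mul]

lemma cos_sub_one_eq_neg_mul_sinc_sq (x : ℝ) : cos x - 1 = -(x ^ 2 / 2) * sinc (x / 2) ^ 2 := by
  rcases eq_or_ne x 0 with rfl | hx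
  · simp
  rw [sinc_of_ne_zero (div_ne_zero hx two_ne_zero), show x = 2 * (x / 2) by ring, cos_two_mul,
    cos_sq']
  field_simp
  ring

lemma tendsto_inv_sqrt_atTop : Tendsto (fun t : ℝ => (√t)⁻¹) atTop (𝓝 0) :=
  tendsto_inv_atTop_zero.comp tendsto_sqrt_atTop

section SumSq

variable {ι : Type*} [Fintype ι]

lemma IsCompact.exists_forall_le_neg_mul_sum_sq {K : Set (ι → ℝ)} (hK : IsCompact K)
    {f : (ι → ℝ) → ℝ} (hf : ContinuousOn f K) (hneg : ∀ θ ∈ K, f θ < 0) :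
    ∃ c > 0, ∀ θ ∈ K, f θ ≤ -c * ∑ i, θ i ^ 2 := by
  rcases K.eq_empty_or_nonempty with rfl | hne
  · exact ⟨1, one_pos, by simp⟩
  have hden : ∀ θ : ι → ℝ, 0 < 1 + ∑ i, θ i ^ 2 := fun θ => by positivity
  obtain ⟨θ₀, hθ₀, hmax⟩ := hK.exists_isMaxOn hne
    (hf.div (by fun_prop) fun θ _ => (hden θ).ne')
  set m := f θ₀ / (1 + ∑ i, θ₀ i ^ 2)
  have hm : m < 0 := div_neg_of_neg_of_pos (hneg θ₀ hθ₀) (hden θ₀)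
  refine ⟨-m, neg_pos.mpr hm, fun θ hθ => ?_⟩
  have hθmax : f θ / (1 + ∑ i, θ i ^ 2) ≤ m := hmax hθ
  rw [div_le_iff₀ (hden θ)] at hθmax
  nlinarith [Finset.sum_nonneg fun i (_ : i ∈ Finset.univ) => sq_nonneg (θ i)]

lemma exists_pos_mul_sum_sq_le {q : (ι → ℝ) → ℝ} (hq : Continuous q)
    (hsmul : ∀ (r : ℝ) v, q (r • v) = r ^ 2 * q v) (hpos : ∀ v ≠ 0, 0 < q v) :
    ∃ c > 0, ∀ v, c * ∑ i, v i ^ 2 ≤ q v := by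
  obtain ⟨c, hc, hcq⟩ := (isCompact_sphere (0 : ι → ℝ) 1).exists_forall_le_neg_mul_sum_sq
    (f := fun v => -q v) hq.neg.continuousOn fun v hv =>
      neg_neg_of_pos (hpos v (ne_zero_of_mem_unit_sphere ⟨v, hv⟩))
  refine ⟨c, hc, fun v => ?_⟩
  rcases eq_or_ne v 0 with rfl | hv
  · have hq0 : q 0 = 0 := by simpa using hsmul 0 0
    simp [hq0]
  set r := ‖v‖
  have hr : r ≠ 0 := norm_ne_zero_iff.mpr hv
  have hw := hcq (r⁻¹ • v) (by simp [r, norm_smul, hr])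
  have hv' : v = r • r⁻¹ • v := (smul_inv_smul₀ hr v).symm
  set w := r⁻¹ • v
  rw [hv', hsmul]
  simp only [Pi.smul_apply, smul_eq_mul, mul_pow, ← Finset.mul_sum]
  nlinarith [sq_nonneg r]

lemma integrable_exp_neg_mul_sum_sq {c : ℝ} (hc : 0 < c) :
    Integrable fun u : ι → ℝ => exp (-c * ∑ i, u i ^ 2) := by
  simp_rw [Finset.mul_sum, exp_sum]
  exact Integrable.fintype_prod (f := fun _ x => exp (-c * x ^ 2))
    fun _ => integrable_exp_neg_mul_sq hc

lemma integral_exp_neg_sum_sq_div_two :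
    ∫ v : ι → ℝ, exp (-(∑ i, v i ^ 2) / 2) = √(2 * π) ^ Fintype.card ι := by
  have hprod (v : ι → ℝ) : exp (-(∑ i, v i ^ 2) / 2) = ∏ i, exp (-(1 / 2) * v i ^ 2) := by
    rw [← exp_sum, ← Finset.mul_sum]
    ring_nf
  simp_rw [hprod]
  rw [integral_fintype_prod_volume_eq_pow (fun x : ℝ => exp (-(1 / 2) * x ^ 2)),
    integral_gaussian]
  norm_num [div_div_eq_mul_div, mul_comm]

open scoped MatrixOrder in
lemma integral_exp_neg_dotProduct_mulVec_div_two [DecidableEq ι] {Q : Matrix ι ι ℝ}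
    (hQ : Q.PosDef) :
    ∫ v : ι → ℝ, exp (-(v ⬝ᵥ Q *ᵥ v) / 2) = √(2 * π) ^ Fintype.card ι / √Q.det := by
  obtain ⟨B, rfl⟩ := CStarAlgebra.nonneg_iff_eq_star_mul_self.mp hQ.posSemidef.nonneg
  have hdet : (star B * B).det = B.det ^ 2 := by
    rw [Matrix.det_mul, Matrix.star_eq_conjTranspose, Matrix.det_conjTranspose, star_trivial, sq]
  have hB : B.det ≠ 0 := fun h => by simpa [hdet, h] using hQ.det_pos
  have hquad (v : ι → ℝ) : v ⬝ᵥ (star B * B) *ᵥ v = ∑ i, (B *ᵥ v) i ^ 2 := by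
    rw [← Matrix.mulVec_mulVec, Matrix.dotProduct_mulVec, Matrix.star_eq_conjTranspose,
      Matrix.vecMul_conjTranspose, star_trivial]
    simp [dotProduct, sq]
  have hmap := Measure.map_linearMap_addHaar_eq_smul_addHaar (volume : Measure (ι → ℝ))
    (f := Matrix.toLin' B) (by rwa [LinearMap.det_toLin'])
  have hcont : Continuous fun v : ι → ℝ => exp (-(∑ i, v i ^ 2) / 2) := by fun_prop
  calc ∫ v : ι → ℝ, exp (-(v ⬝ᵥ (star B * B) *ᵥ v) / 2)
      = ∫ v, exp (-(∑ i, v i ^ 2) / 2) ∂(Measure.map (Matrix.toLin' B) volume) := by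
        rw [integral_map (Matrix.toLin' B).continuous_of_finiteDimensional.aemeasurable
          hcont.aestronglyMeasurable]
        simp [hquad]
    _ = √(2 * π) ^ Fintype.card ι / √(star B * B).det := by
        rw [hmap, integral_smul_measure, integral_exp_neg_sum_sq_div_two, LinearMap.det_toLin',
          hdet, sqrt_sq_eq_abs, ENNReal.toReal_ofReal (abs_nonneg _), abs_inv, smul_eq_mul,
          div_eq_inv_mul]

end SumSq

namespace LatticeWalk

section Pairing

variable {ι : Type*} [Fintype ι]

def fundamentalBox (ι : Type*) : Set (ι → ℝ) := Set.Icc (fun _ => -π) (fun _ => π)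

lemma fundamentalBox_mem_nhds : fundamentalBox ι ∈ 𝓝 0 := by
  rw [fundamentalBox, ← Set.pi_univ_Icc]
  exact set_pi_mem_nhds Set.finite_univ fun _ _ => Icc_mem_nhds (by simp [pi_pos]) pi_pos

omit [Fintype ι] in
lemma abs_le_pi_of_mem_fundamentalBox {θ : ι → ℝ} (hθ : θ ∈ fundamentalBox ι) (i : ι) :
    |θ i| ≤ π :=
  abs_le.mpr ⟨hθ.1 i, hθ.2 i⟩

def pairing (θ : ι → ℝ) : (ι → ℤ) →+ ℝ where
  toFun z := ∑ i, (z i : ℝ) * θ i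
  map_zero' := by simp
  map_add' z w := by simp [add_mul, Finset.sum_add_distrib]

@[simp]
lemma pairing_apply (θ : ι → ℝ) (z : ι → ℤ) : pairing θ z = ∑ i, (z i : ℝ) * θ i := rfl

lemma pairing_smul (r : ℝ) (θ : ι → ℝ) (z : ι → ℤ) : pairing (r • θ) z = r * pairing θ z := by
  simp [Finset.mul_sum, mul_left_comm]

lemma pairing_single [DecidableEq ι] (θ : ι → ℝ) (i : ι) : pairing θ (Pi.single i 1) = θ i := by
  simp [Pi.single_apply]

@[fun_prop]
lemma continuous_pairing (z : ι → ℤ) : Continuous fun θ : ι → ℝ => pairing θ z := by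
  simp only [pairing_apply]
  fun_prop

lemma sq_pairing_le (θ : ι → ℝ) (z : ι → ℤ) :
    pairing θ z ^ 2 ≤ (∑ i, (z i : ℝ) ^ 2) * ∑ i, θ i ^ 2 :=
  Finset.sum_mul_sq_le_sq_mul_sq _ _ _

lemma sum_mul_cos_sub_one_le_of_abs_pairing_le {a : (ι → ℤ) → ℝ} {F : Finset (ι → ℤ)}
    (hF : ∀ z ∈ F, 0 ≤ a z) {θ : ι → ℝ}
    (hθ : ∀ z ∈ F, |pairing θ z| ≤ π) :
    ∑ z ∈ F, a z * (cos (pairing θ z) - 1) ≤ -(2 / π ^ 2) * ∑ z ∈ F, a z * pairing θ z ^ 2 := by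
  rw [Finset.mul_sum]
  refine Finset.sum_le_sum fun z hz => ?_
  nlinarith [cos_le_one_sub_mul_cos_sq (hθ z hz), hF z hz]

variable [DecidableEq ι]

lemma apply_mem_of_forall_pairing_mem {S : Set (ι → ℤ)}
    (hS : ∀ i, Pi.single i 1 ∈ AddSubgroup.closure S) {H : AddSubgroup ℝ} {θ : ι → ℝ}
    (hθ : ∀ z ∈ S, pairing θ z ∈ H) (i : ι) : θ i ∈ H := by
  have hle : AddSubgroup.closure S ≤ H.comap (pairing θ) := (AddSubgroup.closure_le _).mpr hθ
  simpa only [AddSubgroup.mem_comap, pairing_single] using hle (hS i)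

lemma exists_pairing_ne_zero {S : Set (ι → ℤ)} (hS : ∀ i, Pi.single i 1 ∈ AddSubgroup.closure S)
    {v : ι → ℝ} (hv : v ≠ 0) : ∃ z ∈ S, pairing v z ≠ 0 := by
  obtain ⟨i, hi⟩ := Function.ne_iff.mp hv
  by_contra! h
  exact hi (apply_mem_of_forall_pairing_mem (H := ⊥) hS (fun z hz => h z hz) i)

lemma exists_finset_single_mem_closure {S : Set (ι → ℤ)} (hS : AddSubgroup.closure S = ⊤) :
    ∃ t : Finset (ι → ℤ), ↑t ⊆ S ∧ ∀ i, Pi.single i 1 ∈ AddSubgroup.closure (t : Set (ι → ℤ)) := by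
  choose t hts ht using fun i : ι =>
    AddSubgroup.exists_finset_subset_of_mem_closure (hS ▸ AddSubgroup.mem_top (Pi.single i (1 : ℤ)))
  refine ⟨Finset.univ.biUnion t, by simpa using hts, fun i => AddSubgroup.closure_mono ?_ (ht i)⟩
  exact Finset.coe_subset.mpr (Finset.subset_biUnion_of_mem t (Finset.mem_univ i))

variable {a : (ι → ℤ) → ℝ} {F : Finset (ι → ℤ)}

lemma sum_mul_sq_pairing_pos (hF : ∀ z ∈ F, 0 < a z)
    (hgen : ∀ i, Pi.single i 1 ∈ AddSubgroup.closure (F : Set (ι → ℤ))) {v : ι → ℝ}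
    (hv : v ≠ 0) : 0 < ∑ z ∈ F, a z * pairing v z ^ 2 := by
  obtain ⟨z, hz, hne⟩ := exists_pairing_ne_zero hgen hv
  exact Finset.sum_pos' (fun z hz => mul_nonneg (hF z hz).le (sq_nonneg _))
    ⟨z, hz, mul_pos (hF z hz) (by positivity)⟩

lemma sum_mul_cos_sub_one_neg (hF : ∀ z ∈ F, 0 < a z)
    (hgen : ∀ i, Pi.single i 1 ∈ AddSubgroup.closure (F : Set (ι → ℤ))) {θ : ι → ℝ}
    (hθ : θ ∈ fundamentalBox ι) (hθ0 : θ ≠ 0) : ∑ z ∈ F, a z * (cos (pairing θ z) - 1) < 0 := by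
  have hle : ∀ z ∈ F, a z * (cos (pairing θ z) - 1) ≤ 0 := fun z hz =>
    mul_nonpos_of_nonneg_of_nonpos (hF z hz).le (sub_nonpos.mpr (cos_le_one _))
  refine (Finset.sum_nonpos hle).lt_of_ne fun h => hθ0 (funext fun i => ?_)
  have hcos : ∀ z ∈ F, pairing θ z ∈ AddSubgroup.zmultiples (2 * π) := fun z hz => by
    have := (Finset.sum_eq_zero_iff_of_nonpos hle).mp h z hz
    rw [← cos_eq_one_iff_mem_zmultiples]
    linarith [(mul_eq_zero.mp this).resolve_left (hF z hz).ne']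
  have hi := (cos_eq_one_iff_mem_zmultiples _).mpr (apply_mem_of_forall_pairing_mem hgen hcos i)
  have hb := abs_le.mp (abs_le_pi_of_mem_fundamentalBox hθ i)
  exact (cos_eq_one_iff_of_lt_of_lt (by linarith [pi_pos]) (by linarith [pi_pos])).mp hi

lemma exists_sum_mul_cos_sub_one_le_neg_mul_sum_sq (hF : ∀ z ∈ F, 0 < a z)
    (hgen : ∀ i, Pi.single i 1 ∈ AddSubgroup.closure (F : Set (ι → ℤ))) :
    ∃ c > 0, ∀ θ ∈ fundamentalBox ι,
      ∑ z ∈ F, a z * (cos (pairing θ z) - 1) ≤ -c * ∑ i, θ i ^ 2 := by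
  obtain ⟨c₀, hc₀, hq⟩ := exists_pos_mul_sum_sq_le
    (q := fun θ => ∑ z ∈ F, a z * pairing θ z ^ 2) (by fun_prop)
    (fun r v => by
      simp only [pairing_smul, mul_pow, Finset.mul_sum]
      exact Finset.sum_congr rfl fun _ _ => by ring)
    (fun v hv => sum_mul_sq_pairing_pos hF hgen hv)
  -- Where all `|pairing θ z| ≤ π` (`z ∈ F`), Jordan's bound on `cos` compares with `q`;
  -- the rest `K` of the box is compact and avoids `0`.
  set K := fundamentalBox ι ∩ ⋃ z ∈ F, {θ | π ≤ |pairing θ z|}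
  have hK : IsCompact K := isCompact_Icc.inter_right <| F.finite_toSet.isClosed_biUnion
    fun z _ => isClosed_le continuous_const (continuous_pairing z).abs
  obtain ⟨c₁, hc₁, hKc⟩ := hK.exists_forall_le_neg_mul_sum_sq (by fun_prop) fun θ hθ =>
    sum_mul_cos_sub_one_neg hF hgen hθ.1 <| by
      rintro rfl
      obtain ⟨z, -, hz⟩ := Set.mem_iUnion₂.mp hθ.2
      simp only [Set.mem_ofPred_eq, pairing_apply, Pi.zero_apply, mul_zero,
        Finset.sum_const_zero, abs_zero] at hz
      linarith [pi_pos]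
  refine ⟨min (2 / π ^ 2 * c₀) c₁, by positivity, fun θ hθ => ?_⟩
  have hsq : 0 ≤ ∑ i, θ i ^ 2 := by positivity
  by_cases hnear : ∀ z ∈ F, |pairing θ z| ≤ π
  · have h₁ := sum_mul_cos_sub_one_le_of_abs_pairing_le (fun z hz => (hF z hz).le) hnear
    have h₂ : (2 / π ^ 2) * (c₀ * ∑ i, θ i ^ 2) ≤ (2 / π ^ 2) * _ :=
      mul_le_mul_of_nonneg_left (hq θ) (by positivity)
    nlinarith [min_le_left (2 / π ^ 2 * c₀) c₁]
  · push Not at hnear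
    obtain ⟨z, hz, hπ⟩ := hnear
    have := hKc θ ⟨hθ, Set.mem_biUnion hz hπ.le⟩
    nlinarith [min_le_right (2 / π ^ 2 * c₀) c₁]

end Pairing

section SecondMoment

variable {ι : Type*} [Fintype ι] {a : (ι → ℤ) → ℝ}

noncomputable def secondMoment (a : (ι → ℤ) → ℝ) : Matrix ι ι ℝ :=
  Matrix.of fun i j => ∑' z, a z * (z i : ℝ) * (z j : ℝ)

lemma abs_mul_le_sum_sq (x : ι → ℝ) (i j : ι) : |x i * x j| ≤ ∑ k, x k ^ 2 := by
  have hi := Finset.single_le_sum (fun k _ => sq_nonneg (x k)) (Finset.mem_univ i)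
  have hj := Finset.single_le_sum (fun k _ => sq_nonneg (x k)) (Finset.mem_univ j)
  rw [abs_mul]
  nlinarith [sq_nonneg (|x i| - |x j|), sq_abs (x i), sq_abs (x j)]

variable (hvar : Summable fun z : ι → ℤ => (∑ i, (z i : ℝ) ^ 2) * a z)
include hvar

lemma summable_mul_apply_mul_apply (i j : ι) :
    Summable fun z : ι → ℤ => a z * (z i : ℝ) * (z j : ℝ) := by
  refine .of_norm_bounded (summable_abs_iff.mpr hvar) fun z => ?_
  calc ‖a z * (z i : ℝ) * (z j : ℝ)‖ = |a z| * |(z i : ℝ) * (z j : ℝ)| := by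
        rw [norm_eq_abs, mul_assoc, abs_mul]
    _ ≤ |a z| * ∑ k, (z k : ℝ) ^ 2 := by
        gcongr
        exact abs_mul_le_sum_sq (fun k => (z k : ℝ)) i j
    _ = |(∑ k, (z k : ℝ) ^ 2) * a z| := by
        rw [abs_mul, abs_of_nonneg (by positivity : (0 : ℝ) ≤ ∑ k, (z k : ℝ) ^ 2), mul_comm]

lemma summable_mul_sq_pairing (θ : ι → ℝ) :
    Summable fun z : ι → ℤ => a z * pairing θ z ^ 2 := by
  refine .of_norm_bounded ((summable_abs_iff.mpr hvar).mul_right (∑ i, θ i ^ 2)) fun z => ?_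
  calc ‖a z * pairing θ z ^ 2‖ = |a z| * pairing θ z ^ 2 := by
        rw [norm_mul, norm_eq_abs, norm_pow, norm_eq_abs, sq_abs]
    _ ≤ |a z| * ((∑ i, (z i : ℝ) ^ 2) * ∑ i, θ i ^ 2) := by
        gcongr
        exact sq_pairing_le θ z
    _ = |(∑ i, (z i : ℝ) ^ 2) * a z| * ∑ i, θ i ^ 2 := by
        rw [abs_mul, abs_of_nonneg (by positivity : (0 : ℝ) ≤ ∑ i, (z i : ℝ) ^ 2)]
        ring

lemma dotProduct_secondMoment_mulVec (v : ι → ℝ) :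
    v ⬝ᵥ secondMoment a *ᵥ v = ∑' z, a z * pairing v z ^ 2 := by
  have hsummable (i j : ι) : Summable fun z : ι → ℤ => a z * z i * z j * (v i * v j) :=
    (summable_mul_apply_mul_apply hvar i j).mul_right _
  have hterm (z : ι → ℤ) :
      a z * pairing v z ^ 2 = ∑ i, ∑ j, a z * z i * z j * (v i * v j) := by
    rw [pairing_apply, sq, Finset.sum_mul_sum, Finset.mul_sum]
    exact Finset.sum_congr rfl fun i _ => by
      rw [Finset.mul_sum]
      exact Finset.sum_congr rfl fun j _ => by ring
  rw [tsum_congr hterm, Summable.tsum_finsetSum fun i _ => summable_sum fun j _ => hsummable i j]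
  simp only [dotProduct, Matrix.mulVec, secondMoment, Matrix.of_apply, Finset.mul_sum]
  refine Finset.sum_congr rfl fun i _ => ?_
  rw [Summable.tsum_finsetSum fun j _ => hsummable i j]
  refine Finset.sum_congr rfl fun j _ => ?_
  rw [tsum_mul_right]
  ring

lemma posDef_secondMoment [DecidableEq ι] (hpos : ∀ z, z ≠ 0 → 0 ≤ a z)
    (hirr : AddSubgroup.closure {z | 0 < a z} = ⊤) : (secondMoment a).PosDef := by
  refine .of_dotProduct_mulVec_pos ?_ fun v hv => ?_
  · ext i j
    simp only [Matrix.conjTranspose_apply, secondMoment, Matrix.of_apply, star_trivial]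
    exact tsum_congr fun z => by ring
  obtain ⟨z, hz, hne⟩ := exists_pairing_ne_zero (fun i => hirr ▸ AddSubgroup.mem_top _) hv
  rw [star_trivial, dotProduct_secondMoment_mulVec hvar]
  refine lt_of_lt_of_le (mul_pos hz (by positivity)) ((summable_mul_sq_pairing hvar v).le_tsum z
    fun w _ => ?_)
  rcases eq_or_ne w 0 with rfl | hw
  · simp
  · exact mul_nonneg (hpos w hw) (sq_nonneg _)

end SecondMoment

variable {d : ℕ} {a : (Fin d → ℤ) → ℝ}

lemma summable_mul_cos_pairing_sub_one (hs : Summable a) (θ : Fin d → ℝ) :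
    Summable fun z => a z * (cos (pairing θ z) - 1) := by
  refine .of_norm_bounded ((summable_abs_iff.mpr hs).mul_right 2) fun z => ?_
  rw [norm_mul, norm_eq_abs, norm_eq_abs]
  gcongr
  rw [abs_le]
  constructor <;> linarith [cos_le_one (pairing θ z), neg_one_le_cos (pairing θ z)]

lemma phiSymb_eq_tsum (hsum : HasSum a 0) (θ : Fin d → ℝ) :
    phiSymb d a θ = ∑' z, a z * (cos (pairing θ z) - 1) := by
  have h := (summable_mul_cos_pairing_sub_one hsum.summable θ).hasSum.add hsum
  rw [add_zero] at h
  rw [phiSymb, ← h.tsum_eq]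
  exact tsum_congr fun z => by simp only [pairing_apply]; ring

lemma phiSymb_le_sum (hsum : HasSum a 0) (hpos : ∀ z, z ≠ 0 → 0 ≤ a z) (θ : Fin d → ℝ)
    (F : Finset (Fin d → ℤ)) : phiSymb d a θ ≤ ∑ z ∈ F, a z * (cos (pairing θ z) - 1) := by
  rw [phiSymb_eq_tsum hsum, ← (summable_mul_cos_pairing_sub_one hsum.summable θ).sum_add_tsum_compl
    (s := F)]
  refine add_le_of_nonpos_right (tsum_nonpos fun z => ?_)
  rcases eq_or_ne (z : Fin d → ℤ) 0 with hz | hz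
  · simp [hz]
  · exact mul_nonpos_of_nonneg_of_nonpos (hpos z hz) (sub_nonpos.mpr (cos_le_one _))

lemma continuous_phiSymb (hs : Summable a) : Continuous (phiSymb d a) :=
  continuous_tsum (fun z => by fun_prop) (summable_abs_iff.mpr hs) fun z θ => by
    rw [norm_mul, norm_eq_abs]
    exact mul_le_of_le_one_right (abs_nonneg _) (abs_cos_le_one _)

lemma exists_phiSymb_le_neg_mul_sum_sq (hsum : HasSum a 0) (hpos : ∀ z, z ≠ 0 → 0 ≤ a z)
    (hirr : AddSubgroup.closure {z | 0 < a z} = ⊤) :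
    ∃ c > 0, ∀ θ ∈ fundamentalBox (Fin d), phiSymb d a θ ≤ -c * ∑ i, θ i ^ 2 := by
  obtain ⟨F, hFa, hgen⟩ := exists_finset_single_mem_closure hirr
  obtain ⟨c, hc, hF⟩ := exists_sum_mul_cos_sub_one_le_neg_mul_sum_sq (fun z hz => hFa hz) hgen
  exact ⟨c, hc, fun θ hθ => (phiSymb_le_sum hsum hpos θ F).trans (hF θ hθ)⟩

lemma tendsto_phiSymb_inv_sqrt_smul_mul (hsum : HasSum a 0)
    (hvar : Summable fun z : Fin d → ℤ => (∑ i, (z i : ℝ) ^ 2) * a z) (u : Fin d → ℝ) :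
    Tendsto (fun t => phiSymb d a ((√t)⁻¹ • u) * t) atTop
      (𝓝 (-(u ⬝ᵥ secondMoment a *ᵥ u) / 2)) := by
  set s : ℝ → ℝ := fun t => (√t)⁻¹
  have heq : (fun t => ∑' z, -(a z * pairing u z ^ 2 / 2) * sinc (s t * pairing u z / 2) ^ 2)
      =ᶠ[atTop] fun t => phiSymb d a (s t • u) * t := by
    filter_upwards [eventually_gt_atTop 0] with t ht
    rw [phiSymb_eq_tsum hsum, ← tsum_mul_right]
    refine tsum_congr fun z => ?_
    rw [pairing_smul, cos_sub_one_eq_neg_mul_sinc_sq, mul_pow, inv_pow, sq_sqrt ht.le]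
    field_simp
  rw [dotProduct_secondMoment_mulVec hvar, neg_div, ← tsum_div_const, ← tsum_neg]
  refine (tendsto_tsum_of_dominated_convergence (bound := fun z => |a z * pairing u z ^ 2 / 2|)
    ((summable_mul_sq_pairing hvar u).div_const 2).abs (fun z => ?_) ?_).congr' heq
  · have hs : Tendsto (fun t => s t * pairing u z / 2) atTop (𝓝 0) := by
      simpa using (tendsto_inv_sqrt_atTop.mul_const (pairing u z)).div_const 2
    have hsinc := (continuous_sinc.tendsto 0).comp hs
    simpa using (hsinc.pow 2).const_mul (-(a z * pairing u z ^ 2 / 2))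
  · refine .of_forall fun t z => ?_
    rw [norm_mul, norm_neg, norm_pow, norm_eq_abs, norm_eq_abs, ← sq_abs]
    exact mul_le_of_le_one_right (abs_nonneg _)
      (pow_le_one₀ (abs_nonneg _) (abs_sinc_le_one _))

noncomputable def ptransIntegrand (d : ℕ) (a : (Fin d → ℤ) → ℝ) (t : ℝ) (w : Fin d → ℝ) :
    (Fin d → ℝ) → ℝ :=
  (fundamentalBox (Fin d)).indicator fun θ => exp (phiSymb d a θ * t) * cos (∑ i, θ i * w i)

lemma rpow_mul_ptrans_eq_integral {t : ℝ} (ht : 0 < t) (x y : Fin d → ℤ) :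
    t ^ ((d : ℝ) / 2) * ptrans d a t x y
      = ((2 * π) ^ d)⁻¹ * ∫ u, ptransIntegrand d a t (fun i => y i - x i) ((√t)⁻¹ • u) := by
  have hpow : √t ^ d = t ^ ((d : ℝ) / 2) := by
    rw [rpow_div_two_eq_sqrt _ ht.le, rpow_natCast]
  rw [Measure.integral_comp_inv_smul_of_nonneg _ _ (sqrt_nonneg t), ptransIntegrand,
    fundamentalBox, integral_indicator measurableSet_Icc, Module.finrank_fintype_fun_eq_card,
    Fintype.card_fin, hpow, smul_eq_mul, ptrans]
  ring

lemma abs_ptransIntegrand_inv_sqrt_smul_le {c : ℝ}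
    (hφ : ∀ θ ∈ fundamentalBox (Fin d), phiSymb d a θ ≤ -c * ∑ i, θ i ^ 2) {t : ℝ} (ht : 0 < t)
    (w u : Fin d → ℝ) :
    |ptransIntegrand d a t w ((√t)⁻¹ • u)| ≤ exp (-c * ∑ i, u i ^ 2) := by
  by_cases hθ : (√t)⁻¹ • u ∈ fundamentalBox (Fin d)
  · rw [ptransIntegrand, Set.indicator_of_mem hθ, abs_mul, abs_of_pos (exp_pos _)]
    have hscale : (∑ i, ((√t)⁻¹ • u) i ^ 2) * t = ∑ i, u i ^ 2 := by
      simp only [Pi.smul_apply, smul_eq_mul, mul_pow, inv_pow, sq_sqrt ht.le, ← Finset.mul_sum]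
      field_simp
    calc exp (phiSymb d a ((√t)⁻¹ • u) * t) * |cos (∑ i, ((√t)⁻¹ • u) i * w i)|
        ≤ exp (phiSymb d a ((√t)⁻¹ • u) * t) :=
          mul_le_of_le_one_right (exp_pos _).le (abs_cos_le_one _)
      _ ≤ exp (-c * ∑ i, u i ^ 2) := by
          rw [exp_le_exp, ← hscale, ← mul_assoc]
          exact mul_le_mul_of_nonneg_right (hφ _ hθ) ht.le
  · rw [ptransIntegrand, Set.indicator_of_notMem hθ, abs_zero]
    positivity

lemma tendsto_ptransIntegrand_inv_sqrt_smul (hsum : HasSum a 0)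
    (hvar : Summable fun z : Fin d → ℤ => (∑ i, (z i : ℝ) ^ 2) * a z) (w u : Fin d → ℝ) :
    Tendsto (fun t => ptransIntegrand d a t w ((√t)⁻¹ • u)) atTop
      (𝓝 (exp (-(u ⬝ᵥ secondMoment a *ᵥ u) / 2))) := by
  have hs : Tendsto (fun t : ℝ => (√t)⁻¹ • u) atTop (𝓝 0) := by
    simpa using tendsto_inv_sqrt_atTop.smul_const u
  have hcos : Tendsto (fun t : ℝ => cos (∑ i, ((√t)⁻¹ • u) i * w i)) atTop (𝓝 1) := by
    have hcont : Continuous fun θ : Fin d → ℝ => cos (∑ i, θ i * w i) := by fun_prop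
    simpa [Function.comp_def] using (hcont.tendsto 0).comp hs
  have hlim := ((continuous_exp.tendsto _).comp
    (tendsto_phiSymb_inv_sqrt_smul_mul hsum hvar u)).mul hcos
  rw [mul_one] at hlim
  refine hlim.congr' ?_
  filter_upwards [hs.eventually fundamentalBox_mem_nhds] with t ht
  rw [ptransIntegrand, Set.indicator_of_mem (show (√t)⁻¹ • u ∈ fundamentalBox (Fin d) from ht)]
  rfl

lemma tendsto_integral_ptransIntegrand (hsum : HasSum a 0)
    (hvar : Summable fun z : Fin d → ℤ => (∑ i, (z i : ℝ) ^ 2) * a z) {c : ℝ} (hc : 0 < c)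
    (hφ : ∀ θ ∈ fundamentalBox (Fin d), phiSymb d a θ ≤ -c * ∑ i, θ i ^ 2) (w : Fin d → ℝ) :
    Tendsto (fun t => ∫ u, ptransIntegrand d a t w ((√t)⁻¹ • u)) atTop
      (𝓝 (∫ u, exp (-(u ⬝ᵥ secondMoment a *ᵥ u) / 2))) := by
  refine tendsto_integral_filter_of_dominated_convergence _ (.of_forall fun t => ?_) ?_
    (integrable_exp_neg_mul_sum_sq hc)
    (.of_forall fun u => tendsto_ptransIntegrand_inv_sqrt_smul hsum hvar w u)
  · have hcont : Continuous fun θ => exp (phiSymb d a θ * t) * cos (∑ i, θ i * w i) :=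
      ((continuous_phiSymb hsum.summable).mul continuous_const).rexp.mul (by fun_prop)
    exact ((hcont.measurable.indicator measurableSet_Icc).comp
      (measurable_const_smul _)).aestronglyMeasurable
  · filter_upwards [eventually_gt_atTop 0] with t ht
    exact .of_forall fun u =>
      (norm_eq_abs _).trans_le (abs_ptransIntegrand_inv_sqrt_smul_le hφ ht w u)

lemma hessPhi_eq_neg_secondMoment : hessPhi d a = -secondMoment a := by
  ext i j
  simp [hessPhi, secondMoment]

lemma gammaConst_eq (hQ : (secondMoment a).PosDef) :
    gammaConst d a = ((2 * π) ^ d)⁻¹ * (√(2 * π) ^ d / √(secondMoment a).det) := by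
  have habs : |(hessPhi d a).det| = (secondMoment a).det := by
    rw [hessPhi_eq_neg_secondMoment, Matrix.det_neg, abs_mul, abs_pow, abs_neg, abs_one, one_pow,
      one_mul, abs_of_pos hQ.det_pos]
  have h2π : (0 : ℝ) < 2 * π := by positivity
  rw [gammaConst, habs, rpow_div_two_eq_sqrt _ h2π.le, rpow_natCast, div_eq_mul_inv, ← mul_assoc]
  congr 1
  have hsq : (2 * π) ^ d = (√(2 * π) ^ d) ^ 2 := by
    rw [← pow_mul, pow_mul', sq_sqrt h2π.le]
  have hs : √(2 * π) ^ d ≠ 0 := pow_ne_zero _ (sqrt_pos.mpr h2π).ne'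
  rw [hsq]
  field_simp

end LatticeWalk

open LatticeWalk in
theorem ptrans_asymptotic_general
    (d : ℕ) (a : (Fin d → ℤ) → ℝ)
    (hpos : ∀ z : Fin d → ℤ, z ≠ 0 → 0 ≤ a z)
    (hsum : HasSum a 0)
    (hvar : Summable fun z : Fin d → ℤ => (∑ i, ((z i : ℝ)) ^ 2) * a z)
    (hirr : AddSubgroup.closure {z : Fin d → ℤ | 0 < a z} = ⊤)
    (x y : Fin d → ℤ) :
    Tendsto (fun t : ℝ => t ^ ((d : ℝ) / 2) * ptrans d a t x y) atTop
      (𝓝 (gammaConst d a)) := by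
  obtain ⟨c, hc, hφ⟩ := exists_phiSymb_le_neg_mul_sum_sq hsum hpos hirr
  have hQ := posDef_secondMoment hvar hpos hirr
  have hlim := (tendsto_integral_ptransIntegrand hsum hvar hc hφ
    (fun i => (y i : ℝ) - x i)).const_mul ((2 * π) ^ d)⁻¹
  rw [integral_exp_neg_dotProduct_mulVec_div_two hQ, Fintype.card_fin, ← gammaConst_eq hQ] at hlim
  refine hlim.congr' ?_
  filter_upwards [eventually_gt_atTop 0] with t ht
  rw [rpow_mul_ptrans_eq_integral ht]

/-- Local limit theorem: `p(t;x,y) ~ γ_d t^{-d/2}` as `t → ∞`. -/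
theorem ptrans_asymptotic
    (d : ℕ) (hd : 1 ≤ d) (a : (Fin d → ℤ) → ℝ)
    (hpos : ∀ z : Fin d → ℤ, z ≠ 0 → 0 ≤ a z)
    (hneg : a 0 < 0)
    (hsymm : ∀ z : Fin d → ℤ, a (-z) = a z)
    (hsum : HasSum a 0)
    (hvar : Summable fun z : Fin d → ℤ => (∑ i, ((z i : ℝ)) ^ 2) * a z)
    (hirr : AddSubgroup.closure {z : Fin d → ℤ | 0 < a z} = ⊤)
    (x y : Fin d → ℤ) :
    Tendsto (fun t : ℝ => t ^ ((d : ℝ) / 2) * ptrans d a t x y) atTop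
      (𝓝 (gammaConst d a)) :=
  ptrans_asymptotic_general d a hpos hsum hvar hirr x y
end

section
/- If d ≥ 3, then for all x, y ∈ ℤ^d the Green's function is finite: G_0(x, y) := ∫_0^∞ p(t; x, y) dt < ∞ (the integral converges). -/
open MeasureTheory Real Filter Topology Asymptotics

open Set

/-!
Since `∑ a = 0`, the symbol is `φ(θ) = -∑_z a(z) (1 - cos⟨z,θ⟩) ≤ 0`, so `|p(t;x,y)|` is at most
`(2π)^{-d} ∫ e^{φ(θ) t} dθ`, and by Tonelli `∫_0^∞ |p(t;x,y)| dt ≤ (2π)^{-d} ∫ dθ / |φ(θ)|`.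
Irreducibility makes `-φ` vanish on the cube `[-π,π]^d` only at `0`, and near `0` it dominates
`c ‖θ‖²` because finitely many steps `z` with `a(z) > 0` already generate `ℤ^d`. Hence
`1/|φ(θ)| ≲ ‖θ‖^{-2}`, which is integrable near the origin exactly when `d ≥ 3`.
-/

lemma AddSubgroup.exists_finset_subset_forall_mem_closure {M ι : Type*} [AddCommGroup M]
    [Finite ι] {T : Set M} {x : ι → M} (hx : ∀ i, x i ∈ AddSubgroup.closure T) :
    ∃ Z : Finset M, ↑Z ⊆ T ∧ ∀ i, x i ∈ AddSubgroup.closure (Z : Set M) := by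
  classical
  have := Fintype.ofFinite ι
  simp_rw [← Submodule.span_int_eq_addSubgroupClosure, Submodule.mem_toAddSubgroup] at hx ⊢
  choose Z hZT hxZ using fun i => Submodule.mem_span_finite_of_mem_span (hx i)
  refine ⟨Finset.univ.biUnion Z, by simpa using hZT, fun i => Submodule.span_mono ?_ (hxZ i)⟩
  exact Finset.coe_subset.2 (Finset.subset_biUnion_of_mem Z (Finset.mem_univ i))

lemma sq_norm_le_of_forall_sq_le {ι : Type*} [Fintype ι] {x : ι → ℝ} {r : ℝ} (hr : 0 ≤ r)
    (h : ∀ i, x i ^ 2 ≤ r) : ‖x‖ ^ 2 ≤ r := by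
  rw [← Real.le_sqrt (norm_nonneg x) hr, pi_norm_le_iff_of_nonneg (sqrt_nonneg r)]
  exact fun i => (Real.norm_eq_abs _).trans_le (abs_le_sqrt (h i))

lemma eq_zero_of_mem_zmultiples_two_pi {x : ℝ} (hx : x ∈ AddSubgroup.zmultiples (2 * π))
    (hlo : -π ≤ x) (hhi : x ≤ π) : x = 0 := by
  obtain ⟨n, rfl⟩ := AddSubgroup.mem_zmultiples_iff.1 hx
  rw [zsmul_eq_mul] at hlo hhi ⊢
  have hn_lt : (n : ℝ) < 1 := by nlinarith [pi_pos]
  have hn_gt : (-1 : ℝ) < n := by nlinarith [pi_pos]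
  obtain rfl : n = 0 := by
    have : n < 1 := by exact_mod_cast hn_lt
    have : -1 < n := by exact_mod_cast hn_gt
    omega
  simp

lemma IsCompact.exists_mul_sq_norm_le {E : Type*} [NormedAddCommGroup E] {f : E → ℝ}
    {S : Set E} (hS : IsCompact S) (hf : ContinuousOn f S) (hpos : ∀ x ∈ S, x ≠ 0 → 0 < f x)
    {c : ℝ} (hc : 0 < c) (hnear : ∀ᶠ x in 𝓝 0, c * ‖x‖ ^ 2 ≤ f x) :
    ∃ c' > 0, ∀ x ∈ S, c' * ‖x‖ ^ 2 ≤ f x := by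
  obtain ⟨δ, hδ, hball⟩ := Metric.eventually_nhds_iff_ball.1 hnear
  set K := S ∩ {x | δ ≤ ‖x‖}
  have hK : IsCompact K := hS.inter_right (isClosed_le continuous_const continuous_norm)
  have hKpos : ∀ x ∈ K, 0 < ‖x‖ ^ 2 := fun x hx => pow_pos (hδ.trans_le hx.2) 2
  obtain ⟨m, hm, hmK⟩ := hK.exists_forall_le' (f := fun x => f x / ‖x‖ ^ 2)
    ((hf.mono inter_subset_left).div (continuous_norm.pow 2).continuousOn
      fun x hx => (hKpos x hx).ne')
    fun x hx => div_pos (hpos x hx.1 (by simpa using (hKpos x hx).ne')) (hKpos x hx)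
  refine ⟨min c m, lt_min hc hm, fun x hx => ?_⟩
  rcases lt_or_ge ‖x‖ δ with hxδ | hxδ
  · exact (mul_le_mul_of_nonneg_right (min_le_left c m) (sq_nonneg _)).trans
      (hball x (by simpa using hxδ))
  · have hxK : x ∈ K := ⟨hx, hxδ⟩
    exact (mul_le_mul_of_nonneg_right (min_le_right c m) (sq_nonneg _)).trans
      ((le_div_iff₀ (hKpos x hxK)).1 (hmK x hxK))

lemma IsCompact.integrableOn_inv_of_mul_sq_norm_le {E : Type*} [NormedAddCommGroup E]
    [NormedSpace ℝ E] [FiniteDimensional ℝ E] [MeasurableSpace E] [BorelSpace E]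
    {μ : Measure E} [μ.IsAddHaarMeasure] (hE : 2 < Module.finrank ℝ E) {f : E → ℝ} {S : Set E}
    (hS : IsCompact S) (hf : AEMeasurable f (μ.restrict S)) {c : ℝ} (hc : 0 < c)
    (hle : ∀ x ∈ S, c * ‖x‖ ^ 2 ≤ f x) :
    IntegrableOn (fun x => (f x)⁻¹) S μ := by
  have : Nontrivial E := Module.nontrivial_of_finrank_pos (R := ℝ) (by omega)
  have hloc : LocallyIntegrable (fun x : E => ‖x‖ ^ (-2 : ℝ)) μ :=
    locallyIntegrable_of_norm_le_rpow (C := 1) (α := 2) (by omega) (by exact_mod_cast hE)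
      (Eventually.of_forall fun x => by rw [one_mul, Real.norm_of_nonneg (by positivity)])
      (measurable_norm.pow_const _).aestronglyMeasurable
  refine ((hloc.integrableOn_isCompact hS).const_mul c⁻¹).mono' hf.inv.aestronglyMeasurable ?_
  filter_upwards [ae_restrict_mem hS.isClosed.measurableSet,
    ae_restrict_of_ae (Measure.ae_ne μ 0)] with x hxS hx0
  have hcx : 0 < c * ‖x‖ ^ 2 := by positivity
  rw [Real.rpow_neg (norm_nonneg x), Real.rpow_two, ← mul_inv, Real.norm_eq_abs, abs_inv,
    abs_of_pos (hcx.trans_le (hle x hxS))]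
  exact inv_anti₀ hcx (hle x hxS)

/-- By Tonelli, since `∫_0^∞ exp (-F θ t) dt = (F θ)⁻¹`. -/
lemma integrableOn_Ioi_integral_of_norm_le_exp {α : Type*} [MeasurableSpace α]
    {ν : Measure α} [SFinite ν] {g : ℝ → α → ℝ} {F : α → ℝ}
    (hg : AEStronglyMeasurable (Function.uncurry g) ((volume.restrict (Ioi 0)).prod ν))
    (hgF : ∀ t θ, ‖g t θ‖ ≤ exp (-F θ * t)) (hF : ∀ᵐ θ ∂ν, 0 < F θ)
    (hFinv : Integrable (fun θ => (F θ)⁻¹) ν) :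
    IntegrableOn (fun t => ∫ θ, g t θ ∂ν) (Ioi 0) := by
  refine Integrable.integral_prod_left (f := Function.uncurry g) ?_
  have hslice : ∀ᵐ θ ∂ν, Integrable (fun t => g t θ) (volume.restrict (Ioi 0)) := by
    filter_upwards [hF, hg.prod_swap.prodMk_left] with θ hθ hθm
    exact (exp_neg_integrableOn_Ioi 0 hθ).mono' hθm (ae_of_all _ fun t => hgF t θ)
  refine (integrable_prod_iff' hg).2 ⟨hslice, hFinv.mono' hg.norm.prod_swap.integral_prod_right' ?_⟩
  filter_upwards [hF, hslice] with θ hθ hθi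
  calc ‖∫ t in Ioi 0, ‖g t θ‖‖ = ∫ t in Ioi 0, ‖g t θ‖ :=
        Real.norm_of_nonneg (integral_nonneg fun _ => norm_nonneg _)
    _ ≤ ∫ t in Ioi 0, exp (-F θ * t) :=
        integral_mono hθi.norm (exp_neg_integrableOn_Ioi 0 hθ) fun t => hgF t θ
    _ = (F θ)⁻¹ := by
        rw [integral_exp_mul_Ioi (by linarith) 0]
        simp

def intPairing (d : ℕ) (θ : Fin d → ℝ) : (Fin d → ℤ) →+ ℝ where
  toFun z := ∑ i, (z i : ℝ) * θ i
  map_zero' := by simp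
  map_add' z w := by simp [add_mul, Finset.sum_add_distrib]

section Symbol

variable {d : ℕ} {a : (Fin d → ℤ) → ℝ}

lemma intPairing_apply (θ : Fin d → ℝ) (z : Fin d → ℤ) :
    intPairing d θ z = ∑ i, (z i : ℝ) * θ i :=
  rfl

lemma continuous_intPairing (z : Fin d → ℤ) : Continuous fun θ => intPairing d θ z := by
  simp only [intPairing_apply]
  fun_prop

lemma intPairing_single (θ : Fin d → ℝ) (i : Fin d) :
    intPairing d θ (Pi.single i 1) = θ i := by
  simp [intPairing, Pi.single_apply]

lemma apply_mem_of_forall_intPairing_mem {T : Set (Fin d → ℤ)} {θ : Fin d → ℝ}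
    {H : AddSubgroup ℝ} (hT : ∀ i, Pi.single i 1 ∈ AddSubgroup.closure T)
    (hθ : ∀ z ∈ T, intPairing d θ z ∈ H) (i : Fin d) : θ i ∈ H := by
  have := (AddSubgroup.closure_le (H.comap (intPairing d θ))).2 hθ (hT i)
  rwa [AddSubgroup.mem_comap, intPairing_single] at this

lemma continuous_phiSymb (ha : Summable a) : Continuous (phiSymb d a) :=
  continuous_tsum (fun z => continuous_const.mul (continuous_cos.comp (by fun_prop))) ha.abs
    fun z θ => by
      simpa [abs_mul] using mul_le_of_le_one_right (abs_nonneg (a z)) (abs_cos_le_one _)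

lemma hasSum_neg_phiSymb (hsum : HasSum a 0) (θ : Fin d → ℝ) :
    HasSum (fun z => a z * (1 - cos (intPairing d θ z))) (-phiSymb d a θ) := by
  have hcos : Summable fun z => a z * cos (intPairing d θ z) :=
    .of_norm_bounded hsum.summable.abs fun z => by
      simpa [abs_mul] using mul_le_of_le_one_right (abs_nonneg (a z)) (abs_cos_le_one _)
  simpa [mul_sub, phiSymb, intPairing] using hsum.sub hcos.hasSum

lemma mul_one_sub_cos_nonneg (hpos : ∀ z : Fin d → ℤ, z ≠ 0 → 0 ≤ a z) (θ : Fin d → ℝ)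
    (z : Fin d → ℤ) : 0 ≤ a z * (1 - cos (intPairing d θ z)) := by
  rcases eq_or_ne z 0 with rfl | hz
  · simp
  · exact mul_nonneg (hpos z hz) (sub_nonneg.2 (cos_le_one _))

variable (hpos : ∀ z : Fin d → ℤ, z ≠ 0 → 0 ≤ a z) (hsum : HasSum a 0)
include hpos hsum

lemma neg_phiSymb_nonneg (θ : Fin d → ℝ) : 0 ≤ -phiSymb d a θ :=
  (hasSum_neg_phiSymb hsum θ).nonneg (mul_one_sub_cos_nonneg hpos θ)

lemma mul_one_sub_cos_le_neg_phiSymb (θ : Fin d → ℝ) (z : Fin d → ℤ) :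
    a z * (1 - cos (intPairing d θ z)) ≤ -phiSymb d a θ :=
  le_hasSum (hasSum_neg_phiSymb hsum θ) z fun w _ => mul_one_sub_cos_nonneg hpos θ w

variable (hirr : AddSubgroup.closure {z : Fin d → ℤ | 0 < a z} = ⊤)
include hirr

lemma neg_phiSymb_pos {θ : Fin d → ℝ}
    (hθ : θ ∈ Icc (fun _ : Fin d => -π) (fun _ => π)) (hθ0 : θ ≠ 0) : 0 < -phiSymb d a θ := by
  refine (neg_phiSymb_nonneg hpos hsum θ).lt_of_ne fun hzero => hθ0 (funext fun i => ?_)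
  have hterms := (hasSum_zero_iff_of_nonneg (mul_one_sub_cos_nonneg hpos θ)).1
    (hzero ▸ hasSum_neg_phiSymb hsum θ)
  have hmem : ∀ z ∈ {z | 0 < a z}, intPairing d θ z ∈ AddSubgroup.zmultiples (2 * π) := by
    intro z hz
    have hcos : cos (intPairing d θ z) = 1 := by
      have := (mul_eq_zero.1 (congrFun hterms z)).resolve_left (ne_of_gt hz)
      linarith
    obtain ⟨n, hn⟩ := (cos_eq_one_iff _).1 hcos
    exact AddSubgroup.mem_zmultiples_iff.2 ⟨n, by rw [zsmul_eq_mul, hn]⟩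
  exact eq_zero_of_mem_zmultiples_two_pi
    (apply_mem_of_forall_intPairing_mem (by simp [hirr]) hmem i) (hθ.1 i) (hθ.2 i)

/-- Near `0`, `-φ` dominates `min a · (2/π²) · max_z ⟨z,θ⟩²` over a finite generating set of
steps, and that maximum is `≥ ‖θ‖² / K²` because the finitely many pairings determine `θ`. -/
lemma eventually_mul_sq_norm_le_neg_phiSymb :
    ∃ c > 0, ∀ᶠ θ in 𝓝 (0 : Fin d → ℝ), c * ‖θ‖ ^ 2 ≤ -phiSymb d a θ := by
  obtain ⟨Z, hZT, hZ⟩ := AddSubgroup.exists_finset_subset_forall_mem_closure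
    (T := {z | 0 < a z}) (x := fun i : Fin d => Pi.single i 1) (by simp [hirr])
  obtain ⟨m, hm, hmZ⟩ : ∃ m > 0, ∀ z ∈ Z, m ≤ a z :=
    Z.finite_toSet.isCompact.exists_forall_le' continuous_of_discreteTopology.continuousOn
      fun z hz => hZT hz
  let L : (Fin d → ℝ) →ₗ[ℝ] (Z → ℝ) :=
    Matrix.mulVecLin (Matrix.of fun (z : Z) i => ((z : Fin d → ℤ) i : ℝ))
  have hL : Function.Injective L := by
    refine (injective_iff_map_eq_zero L).2 fun θ hθ => funext fun i => ?_
    exact AddSubgroup.mem_bot.1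
      (apply_mem_of_forall_intPairing_mem hZ (fun z hz => congrFun hθ ⟨z, hz⟩) i)
  obtain ⟨K, hK, hKL⟩ := L.injective_iff_antilipschitz.1 hL
  have hsmall : ∀ᶠ θ in 𝓝 (0 : Fin d → ℝ), ∀ z ∈ Z, |intPairing d θ z| ≤ π := by
    refine (Z.eventually_all).2 fun z _ => ?_
    exact (ContinuousAt.eventually_lt (continuous_intPairing z).abs.continuousAt
      continuousAt_const (by simp [intPairing_apply, pi_pos])).mono fun θ h => h.le
  refine ⟨2 * m / (π ^ 2 * K ^ 2), by positivity, ?_⟩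
  filter_upwards [hsmall] with θ hθ
  have hcoord : ∀ z : Z, L θ z ^ 2 ≤ π ^ 2 / (2 * m) * -phiSymb d a θ := by
    intro ⟨z, hz⟩
    set s := intPairing d θ z
    have hcos := cos_le_one_sub_mul_cos_sq (hθ z hz)
    have hdom : m * (2 / π ^ 2 * s ^ 2) ≤ -phiSymb d a θ := calc
      m * (2 / π ^ 2 * s ^ 2) ≤ a z * (2 / π ^ 2 * s ^ 2) := by gcongr; exact hmZ z hz
      _ ≤ a z * (1 - cos s) := by gcongr; exact (hZT hz).le; linarith
      _ ≤ -phiSymb d a θ := mul_one_sub_cos_le_neg_phiSymb hpos hsum θ z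
    calc L θ ⟨z, hz⟩ ^ 2 = π ^ 2 / (2 * m) * (m * (2 / π ^ 2 * s ^ 2)) := by
          field_simp; rfl
      _ ≤ π ^ 2 / (2 * m) * -phiSymb d a θ := by gcongr
  have hLθ := sq_norm_le_of_forall_sq_le
    (mul_nonneg (by positivity) (neg_phiSymb_nonneg hpos hsum θ)) hcoord
  have hθL : ‖θ‖ ^ 2 ≤ K ^ 2 * ‖L θ‖ ^ 2 := by
    rw [← mul_pow]
    gcongr
    simpa using hKL.le_mul_dist θ 0
  calc 2 * m / (π ^ 2 * K ^ 2) * ‖θ‖ ^ 2 ≤ 2 * m / (π ^ 2 * K ^ 2) * (K ^ 2 * ‖L θ‖ ^ 2) := by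
        gcongr
    _ = 2 * m / π ^ 2 * ‖L θ‖ ^ 2 := by field_simp
    _ ≤ 2 * m / π ^ 2 * (π ^ 2 / (2 * m) * -phiSymb d a θ) := by gcongr
    _ = -phiSymb d a θ := by field_simp

lemma exists_mul_sq_norm_le_neg_phiSymb :
    ∃ c > 0, ∀ θ ∈ Icc (fun _ : Fin d => -π) (fun _ => π), c * ‖θ‖ ^ 2 ≤ -phiSymb d a θ := by
  obtain ⟨c, hc, hnear⟩ := eventually_mul_sq_norm_le_neg_phiSymb hpos hsum hirr
  exact isCompact_Icc.exists_mul_sq_norm_le (continuous_phiSymb hsum.summable).neg.continuousOn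
    (fun θ hθ hθ0 => neg_phiSymb_pos hpos hsum hirr hθ hθ0) hc hnear

end Symbol

theorem green_function_finite_general
    (d : ℕ) (a : (Fin d → ℤ) → ℝ)
    (hpos : ∀ z : Fin d → ℤ, z ≠ 0 → 0 ≤ a z)
    (hsum : HasSum a 0)
    (hirr : AddSubgroup.closure {z : Fin d → ℤ | 0 < a z} = ⊤)
    (hd3 : 3 ≤ d) (x y : Fin d → ℤ) :
    IntegrableOn (fun t : ℝ => ptrans d a t x y) (Set.Ioi 0) := by
  have : NeZero d := ⟨by omega⟩
  have hφ := continuous_phiSymb hsum.summable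
  obtain ⟨c, hc, hle⟩ := exists_mul_sq_norm_le_neg_phiSymb hpos hsum hirr
  have hF : ∀ᵐ θ ∂(volume.restrict (Icc (fun _ : Fin d => -π) (fun _ => π))),
      0 < -phiSymb d a θ := by
    filter_upwards [ae_restrict_mem measurableSet_Icc,
      ae_restrict_of_ae (Measure.ae_ne volume 0)] with θ hθ hθ0
    exact (show 0 < c * ‖θ‖ ^ 2 by positivity).trans_le (hle θ hθ)
  have hFinv := isCompact_Icc.integrableOn_inv_of_mul_sq_norm_le (μ := volume)
    (by rw [Module.finrank_fin_fun]; omega) hφ.neg.aemeasurable hc hle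
  refine (integrableOn_Ioi_integral_of_norm_le_exp (F := fun θ => -phiSymb d a θ) ?_ ?_ hF
    hFinv).const_mul ((2 * π) ^ d)⁻¹
  · exact Continuous.aestronglyMeasurable (by fun_prop)
  · intro t θ
    rw [neg_neg, norm_mul, Real.norm_of_nonneg (exp_pos _).le]
    exact mul_le_of_le_one_right (exp_pos _).le (Real.norm_eq_abs _ ▸ abs_cos_le_one _)

/-- For `d ≥ 3` the Green's function `G_0(x,y) = ∫_0^∞ p(t;x,y) dt` is finite,
i.e. the integral converges. -/
theorem green_function_finite
    (d : ℕ) (hd : 1 ≤ d) (a : (Fin d → ℤ) → ℝ)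
    (hpos : ∀ z : Fin d → ℤ, z ≠ 0 → 0 ≤ a z)
    (hneg : a 0 < 0)
    (hsymm : ∀ z : Fin d → ℤ, a (-z) = a z)
    (hsum : HasSum a 0)
    (hvar : Summable fun z : Fin d → ℤ => (∑ i, ((z i : ℝ)) ^ 2) * a z)
    (hirr : AddSubgroup.closure {z : Fin d → ℤ | 0 < a z} = ⊤)
    (hd3 : 3 ≤ d) (x y : Fin d → ℤ) :
    IntegrableOn (fun t : ℝ => ptrans d a t x y) (Set.Ioi 0) :=
  green_function_finite_general d a hpos hsum hirr hd3 x y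
end

section
/- If d = 1 or d = 2, then G_λ(0, 0) → ∞ as λ → 0+; that is, for every M > 0 there exists λ_0 > 0 such that ∫_0^∞ e^{-λt} p(t; 0, 0) dt > M for all 0 < λ < λ_0. -/
open MeasureTheory Real Filter Topology Asymptotics

/-! Since `1 - cos x ≤ x² / 2`, the finite second moment `σ² = ∑ |z|² a(z)` gives
`φ(θ) ≥ -σ² |θ|² / 2`, while `φ ≤ 0`. Integrating `e^{φ(θ) t}` over the cube of side `2 / √t`
therefore bounds the return probability below by `c t^{-d/2}`, which is at least `c / t` for
`d ≤ 2`. As `p(t; 0, 0) ≥ 0`, `G_λ(0, 0) ≥ e⁻¹ ∫_1^{1/λ} c / t dt = e⁻¹ c log (1 / λ) → ∞`. -/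

open Set

lemma mul_neg_log_le_setIntegral_exp_mul {f : ℝ → ℝ} {c lam : ℝ} (hlam : 0 < lam)
    (hlam1 : lam < 1) (hf_nonneg : ∀ t, 0 < t → 0 ≤ f t)
    (hf_int : IntegrableOn (fun t => exp (-lam * t) * f t) (Ioi 0))
    (hf_lb : ∀ t, 1 ≤ t → c / t ≤ f t) :
    exp (-1) * c * -log lam ≤ ∫ t in Ioi 0, exp (-lam * t) * f t := by
  have hT : 1 ≤ lam⁻¹ := (one_le_inv₀ hlam).2 hlam1.le
  have hsub : Ioc 1 lam⁻¹ ⊆ Ioi (0 : ℝ) := fun t ht => one_pos.trans ht.1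
  have h_inv_int : IntegrableOn (fun t : ℝ => exp (-1) * c * t⁻¹) (Ioc 1 lam⁻¹) :=
    ((continuousOn_const.mul (continuousOn_inv₀.mono fun t ht => (one_pos.trans_le ht.1).ne'))
      |>.integrableOn_Icc).mono_set Ioc_subset_Icc_self
  calc exp (-1) * c * -log lam
      = ∫ t in Ioc 1 lam⁻¹, exp (-1) * c * t⁻¹ := by
        rw [integral_const_mul, ← intervalIntegral.integral_of_le hT,
          integral_inv_of_pos one_pos (one_pos.trans_le hT), div_one, log_inv]
    _ ≤ ∫ t in Ioc 1 lam⁻¹, exp (-lam * t) * f t := by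
      refine setIntegral_mono_on h_inv_int (hf_int.mono_set hsub) measurableSet_Ioc
        fun t ht => ?_
      have h_exp : exp (-1) ≤ exp (-lam * t) := by
        have : lam * t ≤ 1 := by
          simpa [hlam.ne'] using mul_le_mul_of_nonneg_left ht.2 hlam.le
        exact exp_le_exp.2 (by linarith)
      rw [mul_assoc, ← div_eq_mul_inv]
      exact mul_le_mul_of_nonneg h_exp (hf_lb t ht.1.le) (exp_pos _).le
        (hf_nonneg t (one_pos.trans ht.1))
    _ ≤ ∫ t in Ioi 0, exp (-lam * t) * f t :=
      setIntegral_mono_set hf_int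
        ((ae_restrict_mem measurableSet_Ioi).mono fun t ht =>
          mul_nonneg (exp_pos _).le (hf_nonneg t ht))
        hsub.eventuallyLE

lemma tendsto_setIntegral_exp_mul_atTop {f : ℝ → ℝ} {c : ℝ} (hc : 0 < c)
    (hf_nonneg : ∀ t, 0 < t → 0 ≤ f t)
    (hf_int : ∀ lam, 0 < lam → IntegrableOn (fun t => exp (-lam * t) * f t) (Ioi 0))
    (hf_lb : ∀ t, 1 ≤ t → c / t ≤ f t) :
    Tendsto (fun lam => ∫ t in Ioi 0, exp (-lam * t) * f t) (𝓝[>] 0) atTop := by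
  have h_log : Tendsto (fun lam => exp (-1) * c * -log lam) (𝓝[>] 0) atTop :=
    (tendsto_neg_atBot_atTop.comp tendsto_log_nhdsGT_zero).const_mul_atTop (by positivity)
  refine tendsto_atTop_mono' _ ?_ h_log
  filter_upwards [Ioo_mem_nhdsGT one_pos] with lam ⟨hlam, hlam1⟩
  exact mul_neg_log_le_setIntegral_exp_mul hlam hlam1 hf_nonneg (hf_int lam hlam) hf_lb

lemma measureReal_Icc_const_neg {d : ℕ} {r : ℝ} (hr : 0 ≤ r) :
    volume.real (Icc (fun _ : Fin d => -r) (fun _ => r)) = (2 * r) ^ d := by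
  rw [measureReal_def, Real.volume_Icc_pi_toReal fun _ => by linarith]
  simp [two_mul]

lemma norm_mul_cos_le_abs (r x : ℝ) : ‖r * cos x‖ ≤ |r| := by
  rw [norm_mul, norm_eq_abs, norm_eq_abs]
  exact mul_le_of_le_one_right (abs_nonneg r) (abs_cos_le_one x)

section RandomWalk

variable {d : ℕ} {a : (Fin d → ℤ) → ℝ}

noncomputable def secondMoment (a : (Fin d → ℤ) → ℝ) : ℝ :=
  ∑' z : Fin d → ℤ, (∑ i, (z i : ℝ) ^ 2) * a z

lemma secondMoment_nonneg (hpos : ∀ z, z ≠ 0 → 0 ≤ a z) : 0 ≤ secondMoment a :=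
  tsum_nonneg fun z => by
    by_cases hz : z = 0
    · simp [hz]
    · exact mul_nonneg (Finset.sum_nonneg fun i _ => sq_nonneg _) (hpos z hz)

lemma summable_mul_cos (ha : Summable a) (θ : Fin d → ℝ) :
    Summable fun z : Fin d → ℤ => a z * cos (∑ i, (z i : ℝ) * θ i) :=
  ha.abs.of_norm_bounded fun z => norm_mul_cos_le_abs (a z) _

lemma phiSymb_eq_tsum_mul_cos_sub_one (hsum : HasSum a 0) (θ : Fin d → ℝ) :
    phiSymb d a θ = ∑' z, a z * (cos (∑ i, (z i : ℝ) * θ i) - 1) := by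
  simp_rw [mul_sub, mul_one]
  rw [(summable_mul_cos hsum.summable θ).tsum_sub hsum.summable, hsum.tsum_eq, sub_zero,
    phiSymb]

lemma phiSymb_nonpos (hpos : ∀ z, z ≠ 0 → 0 ≤ a z) (hsum : HasSum a 0) (θ : Fin d → ℝ) :
    phiSymb d a θ ≤ 0 := by
  rw [phiSymb_eq_tsum_mul_cos_sub_one hsum]
  refine tsum_nonpos fun z => ?_
  by_cases hz : z = 0
  · simp [hz]
  · exact mul_nonpos_of_nonneg_of_nonpos (hpos z hz) (sub_nonpos.2 (cos_le_one _))

lemma neg_secondMoment_mul_le_phiSymb (hpos : ∀ z, z ≠ 0 → 0 ≤ a z) (hsum : HasSum a 0)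
    (hvar : Summable fun z : Fin d → ℤ => (∑ i, (z i : ℝ) ^ 2) * a z) (θ : Fin d → ℝ) :
    -(secondMoment a / 2 * ∑ i, θ i ^ 2) ≤ phiSymb d a θ := by
  have h_term : ∀ z : Fin d → ℤ, -((∑ i, θ i ^ 2) / 2 * ((∑ i, (z i : ℝ) ^ 2) * a z))
      ≤ a z * (cos (∑ i, (z i : ℝ) * θ i) - 1) := by
    intro z
    by_cases hz : z = 0
    · simp [hz]
    have h_cs : (∑ i, (z i : ℝ) * θ i) ^ 2 ≤ (∑ i, (z i : ℝ) ^ 2) * ∑ i, θ i ^ 2 :=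
      Finset.sum_mul_sq_le_sq_mul_sq _ _ _
    nlinarith [hpos z hz, mul_le_mul_of_nonneg_left h_cs (hpos z hz),
      one_sub_sq_div_two_le_cos (x := ∑ i, (z i : ℝ) * θ i)]
  have h_summable : Summable fun z : Fin d → ℤ => a z * (cos (∑ i, (z i : ℝ) * θ i) - 1) := by
    simpa [mul_sub] using (summable_mul_cos hsum.summable θ).sub hsum.summable
  calc -(secondMoment a / 2 * ∑ i, θ i ^ 2)
      = ∑' z : Fin d → ℤ, -((∑ i, θ i ^ 2) / 2 * ((∑ i, (z i : ℝ) ^ 2) * a z)) := by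
        rw [tsum_neg, tsum_mul_left, secondMoment]; ring
    _ ≤ _ := (hvar.mul_left _).neg.tsum_le_tsum h_term h_summable
    _ = phiSymb d a θ := (phiSymb_eq_tsum_mul_cos_sub_one hsum θ).symm

lemma ptrans_zero_zero (t : ℝ) : ptrans d a t 0 0 = ((2 * π) ^ d)⁻¹ *
    ∫ θ in Icc (fun _ : Fin d => -π) (fun _ => π), exp (phiSymb d a θ * t) := by
  simp [ptrans]

lemma ptrans_zero_zero_nonneg (t : ℝ) : 0 ≤ ptrans d a t 0 0 := by
  rw [ptrans_zero_zero]
  exact mul_nonneg (by positivity)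
    (setIntegral_nonneg measurableSet_Icc fun _ _ => (exp_pos _).le)

lemma integrableOn_exp_phiSymb_mul (ha : Summable a) (t : ℝ) {l u : Fin d → ℝ} :
    IntegrableOn (fun θ => exp (phiSymb d a θ * t)) (Icc l u) :=
  (continuous_exp.comp ((continuous_phiSymb ha).mul continuous_const)).continuousOn
    |>.integrableOn_compact isCompact_Icc

lemma ptrans_zero_zero_zero : ptrans d a 0 0 0 = 1 := by
  rw [ptrans_zero_zero]
  simp only [mul_zero, exp_zero, setIntegral_const, smul_eq_mul, mul_one,
    measureReal_Icc_const_neg pi_pos.le]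
  exact inv_mul_cancel₀ (by positivity)

lemma antitone_ptrans_zero_zero (hpos : ∀ z, z ≠ 0 → 0 ≤ a z) (hsum : HasSum a 0) :
    Antitone fun t => ptrans d a t 0 0 := by
  intro t₁ t₂ h
  simp only [ptrans_zero_zero]
  gcongr ?_ * ?_
  refine setIntegral_mono_on (integrableOn_exp_phiSymb_mul hsum.summable t₂)
    (integrableOn_exp_phiSymb_mul hsum.summable t₁) measurableSet_Icc fun θ _ => ?_
  exact exp_le_exp.2 (mul_le_mul_of_nonpos_left h (phiSymb_nonpos hpos hsum θ))

lemma ptrans_zero_zero_le_one (hpos : ∀ z, z ≠ 0 → 0 ≤ a z) (hsum : HasSum a 0) {t : ℝ}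
    (ht : 0 ≤ t) : ptrans d a t 0 0 ≤ 1 :=
  ptrans_zero_zero_zero (a := a) ▸ antitone_ptrans_zero_zero hpos hsum ht

lemma integrableOn_exp_mul_ptrans_zero_zero (hpos : ∀ z, z ≠ 0 → 0 ≤ a z) (hsum : HasSum a 0)
    {lam : ℝ} (hlam : 0 < lam) :
    IntegrableOn (fun t => exp (-lam * t) * ptrans d a t 0 0) (Ioi 0) := by
  refine Integrable.mono (exp_neg_integrableOn_Ioi 0 hlam)
    ((by fun_prop : Measurable fun t => exp (-lam * t)).mul
      (antitone_ptrans_zero_zero hpos hsum).measurable).aestronglyMeasurable ?_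
  filter_upwards [ae_restrict_mem measurableSet_Ioi] with t ht
  rw [norm_mul, norm_of_nonneg (ptrans_zero_zero_nonneg t)]
  exact mul_le_of_le_one_right (norm_nonneg _) (ptrans_zero_zero_le_one hpos hsum ht.le)

lemma div_pi_pow_mul_exp_le_ptrans_zero_zero (hpos : ∀ z, z ≠ 0 → 0 ≤ a z)
    (hsum : HasSum a 0) (hvar : Summable fun z : Fin d → ℤ => (∑ i, (z i : ℝ) ^ 2) * a z)
    {ε t : ℝ} (hε : 0 < ε) (hεπ : ε ≤ π) (ht : 0 ≤ t) :
    (ε / π) ^ d * exp (-(secondMoment a * d * ε ^ 2 * t) / 2) ≤ ptrans d a t 0 0 := by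
  set S := Icc (fun _ : Fin d => -ε) (fun _ => ε)
  have h_on_S : ∀ θ ∈ S,
      exp (-(secondMoment a * d * ε ^ 2 * t) / 2) ≤ exp (phiSymb d a θ * t) := by
    intro θ hθ
    have h_norm : ∑ i, θ i ^ 2 ≤ d * ε ^ 2 := by
      simpa using Finset.sum_le_sum fun i (_ : i ∈ Finset.univ) =>
        sq_le_sq' (hθ.1 i) (hθ.2 i)
    have h_phi := neg_secondMoment_mul_le_phiSymb hpos hsum hvar θ
    have h_moment := secondMoment_nonneg hpos
    refine exp_le_exp.2 ?_
    nlinarith [mul_le_mul_of_nonneg_left h_norm (mul_nonneg h_moment ht)]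
  calc (ε / π) ^ d * exp (-(secondMoment a * d * ε ^ 2 * t) / 2)
      = ((2 * π) ^ d)⁻¹ * ∫ _ in S, exp (-(secondMoment a * d * ε ^ 2 * t) / 2) := by
        rw [setIntegral_const, smul_eq_mul, measureReal_Icc_const_neg hε.le, div_pow, mul_pow,
          mul_pow]
        field_simp
    _ ≤ ((2 * π) ^ d)⁻¹ * ∫ θ in S, exp (phiSymb d a θ * t) := by
      refine mul_le_mul_of_nonneg_left ?_ (by positivity)
      exact setIntegral_mono_on (integrableOn_const isCompact_Icc.measure_lt_top.ne)
        (integrableOn_exp_phiSymb_mul hsum.summable t) measurableSet_Icc h_on_S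
    _ ≤ ((2 * π) ^ d)⁻¹ * ∫ θ in Icc (fun _ : Fin d => -π) (fun _ => π),
          exp (phiSymb d a θ * t) := by
      refine mul_le_mul_of_nonneg_left ?_ (by positivity)
      exact setIntegral_mono_set (integrableOn_exp_phiSymb_mul hsum.summable t)
        (.of_forall fun _ => (exp_pos _).le)
        (Icc_subset_Icc (fun _ => neg_le_neg hεπ) fun _ => hεπ).eventuallyLE
    _ = ptrans d a t 0 0 := (ptrans_zero_zero t).symm

lemma exists_div_le_ptrans_zero_zero (hpos : ∀ z, z ≠ 0 → 0 ≤ a z) (hsum : HasSum a 0)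
    (hvar : Summable fun z : Fin d → ℤ => (∑ i, (z i : ℝ) ^ 2) * a z) (hd : d ≤ 2) :
    ∃ c > 0, ∀ t, 1 ≤ t → c / t ≤ ptrans d a t 0 0 := by
  refine ⟨exp (-(secondMoment a * d) / 2) / π ^ d, by positivity, fun t ht => ?_⟩
  have ht₀ : 0 < t := one_pos.trans_le ht
  have h_sqrt : 1 ≤ √t := one_le_sqrt.2 ht
  -- `ε = 1 / √t` makes `ε² t = 1`
  have h_main := div_pi_pow_mul_exp_le_ptrans_zero_zero hpos hsum hvar
    (inv_pos.2 (one_pos.trans_le h_sqrt)) ((inv_le_one_of_one_le₀ h_sqrt).trans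
      (one_le_two.trans two_le_pi)) ht₀.le
  have h_pow : (√t) ^ d ≤ t := by
    simpa [sq_sqrt ht₀.le] using pow_le_pow_right₀ h_sqrt hd
  rw [inv_pow, sq_sqrt ht₀.le, inv_mul_cancel_right₀ ht₀.ne'] at h_main
  calc exp (-(secondMoment a * d) / 2) / π ^ d / t
      ≤ exp (-(secondMoment a * d) / 2) / π ^ d / (√t) ^ d := by gcongr
    _ = ((√t)⁻¹ / π) ^ d * exp (-(secondMoment a * d) / 2) := by
      rw [div_pow, inv_pow]; ring
    _ ≤ ptrans d a t 0 0 := h_main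

end RandomWalk

theorem Glam_tendsto_infinity_general
    (d : ℕ) (a : (Fin d → ℤ) → ℝ)
    (hpos : ∀ z : Fin d → ℤ, z ≠ 0 → 0 ≤ a z)
    (hsum : HasSum a 0)
    (hvar : Summable fun z : Fin d → ℤ => (∑ i, ((z i : ℝ)) ^ 2) * a z)
    (hd12 : d = 1 ∨ d = 2) :
    ∀ M : ℝ, 0 < M → ∃ lam₀ : ℝ, 0 < lam₀ ∧
      ∀ lam : ℝ, 0 < lam → lam < lam₀ → M < Glam d a lam 0 0 := by
  intro M _
  obtain ⟨c, hc, h_lb⟩ := exists_div_le_ptrans_zero_zero hpos hsum hvar (by omega)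
  have h_tendsto : Tendsto (fun lam => Glam d a lam 0 0) (𝓝[>] 0) atTop :=
    tendsto_setIntegral_exp_mul_atTop hc (fun t _ => ptrans_zero_zero_nonneg t)
      (fun _ hlam => integrableOn_exp_mul_ptrans_zero_zero hpos hsum hlam) h_lb
  obtain ⟨lam₀, hlam₀, h_sub⟩ :=
    mem_nhdsGT_iff_exists_Ioo_subset.1 (h_tendsto.eventually_gt_atTop M)
  exact ⟨lam₀, hlam₀, fun lam h₀ h₁ => h_sub ⟨h₀, h₁⟩⟩

/-- For `d = 1` or `d = 2`, `G_λ(0,0) → ∞` as `λ → 0+`. -/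
theorem Glam_tendsto_infinity
    (d : ℕ) (hd : 1 ≤ d) (a : (Fin d → ℤ) → ℝ)
    (hpos : ∀ z : Fin d → ℤ, z ≠ 0 → 0 ≤ a z)
    (hneg : a 0 < 0)
    (hsymm : ∀ z : Fin d → ℤ, a (-z) = a z)
    (hsum : HasSum a 0)
    (hvar : Summable fun z : Fin d → ℤ => (∑ i, ((z i : ℝ)) ^ 2) * a z)
    (hirr : AddSubgroup.closure {z : Fin d → ℤ | 0 < a z} = ⊤)
    (hd12 : d = 1 ∨ d = 2) :
    ∀ M : ℝ, 0 < M → ∃ lam₀ : ℝ, 0 < lam₀ ∧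
      ∀ lam : ℝ, 0 < lam → lam < lam₀ → M < Glam d a lam 0 0 :=
  Glam_tendsto_infinity_general d a hpos hsum hvar hd12
end
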